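/- arXiv:1405.4548 — 3 statements merged into one kernel-verified Lean document; each statement's English description precedes it below -/
import Mathlib

section
/- Let K be a complete non-archimedean field and let R be a Banach K-algebra. Let P = (P₁,…,P_m) be polynomials in R[σ₁,…,σ_n,τ₁,…,τ_m] with P(σ=0,τ=0) = 0 and det((∂P_i/∂τ_j)(σ=0,τ=0)) a unit of R, and let F = (F₁,…,F_m) be the unique m-tuple of formal power series in R[[σ₁,…,σ_n]] with F(σ=0) = 0 and P(σ,F(σ)) = 0. Then F has a positive radius of convergence: writing F_i = Σ_I d_{iI} σ^I over multi-indices I ∈ ℕⁿ, there exists a real number r > 0 such that for every ε > 0 one has ‖d_{iI}‖·r^{|I|} < ε for all i and all but finitely many multi-indices I. -/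
/-!
Reading off the coefficient of `σ^I` in `P(σ, F(σ)) = 0` gives `J · F_I + E_I = 0`, where
`F_I = (coeff I (F j))_j`, `J = (∂P_i/∂τ_j)(0, 0)` and `E_I` collects the contributions of the
monomials of `P` other than the `τ_j`. Because every `F_j` has zero constant term, such a monomial
contributes only through coefficients of `F` of total degree `< |I|`: it either is `1` or `σ_k`,
or it is a product of at least two factors of positive order. For an ultrametric norm the
coefficient of a product is bounded by the largest product of coefficient norms, so induction on
`|I|` gives `‖F_I‖ ≤ M ^ (2|I| - 1)` once `M` dominates `1`, `‖1‖` and `‖J⁻¹‖ · ‖P‖ · ‖1‖`.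
Hence `r = (2 M²)⁻¹` works.
-/

open Finsupp Matrix

theorem MvPolynomial.aeval_monomial_one_eq_prod_toMultiset {τ R S : Type*} [CommSemiring R]
    [CommSemiring S] [Algebra R S] (φ : τ → S) (d : τ →₀ ℕ) :
    aeval φ (monomial d (1 : R)) = (d.toMultiset.map φ).prod := by
  rw [aeval_monomial, map_one, one_mul, toMultiset_map, prod_toMultiset,
    prod_mapDomain_index pow_zero pow_add]

theorem MvPolynomial.eval_zero_pderiv {τ R : Type*} [CommRing R] (s : τ) (p : MvPolynomial τ R) :
    eval (fun _ => (0 : R)) (pderiv s p) = p.coeff (single s 1) := by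
  rw [eval_zero', MvPolynomial.constantCoeff_eq, coeff_pderiv]
  simp

theorem Finsupp.eq_zero_or_exists_eq_single_of_degree_le_one {τ : Type*} {d : τ →₀ ℕ}
    (h : degree d ≤ 1) : d = 0 ∨ ∃ s, d = single s 1 := by
  classical
  rcases Nat.le_one_iff_eq_zero_or_eq_one.1 h with h | h
  · exact .inl ((degree_eq_zero_iff d).1 h)
  · obtain ⟨s, hs⟩ := Multiset.card_eq_one.1 ((card_toMultiset d).trans h)
    exact .inr ⟨s, by rw [← toMultiset_toFinsupp d, hs, Multiset.toFinsupp_singleton]⟩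

theorem Matrix.norm_le_of_mulVec_add_eq_zero {ι R : Type*} [Fintype ι] [DecidableEq ι]
    [NormedCommRing R] [IsUltrametricDist R] {B : Matrix ι ι R} (hB : IsUnit B.det)
    {x e : ι → R} (h : B *ᵥ x + e = 0) {L b : ℝ} (hL : ∀ i j, ‖B⁻¹ i j‖ ≤ L)
    (he : ∀ i, ‖e i‖ ≤ b) (j : ι) : ‖x j‖ ≤ L * b := by
  have hx : x j = -∑ i, B⁻¹ j i * e i := by
    rw [← one_mulVec x, ← nonsing_inv_mul B hB, ← mulVec_mulVec, eq_neg_of_add_eq_zero_left h,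
      mulVec_neg]
    rfl
  rw [hx, norm_neg]
  refine IsUltrametricDist.norm_sum_le_of_forall_le_of_nonempty ⟨j, Finset.mem_univ j⟩
    fun i _ => (norm_mul_le _ _).trans ?_
  exact mul_le_mul (hL j i) (he i) (norm_nonneg _) ((norm_nonneg _).trans (hL j j))

namespace MvPowerSeries

variable {σ τ R : Type*}

theorem card_le_order_multiset_prod [CommSemiring R] {s : Multiset (MvPowerSeries σ R)}
    (hs : ∀ g ∈ s, constantCoeff g = 0) : (Multiset.card s : ℕ∞) ≤ s.prod.order := by
  induction s using Multiset.induction_on with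
  | empty => simp
  | cons g t ih =>
    rw [Multiset.prod_cons, Multiset.card_cons, Nat.cast_succ, add_comm]
    exact (add_le_add (one_le_order_iff_constCoeff_eq_zero.2 (hs g (Multiset.mem_cons_self g t)))
      (ih fun g' hg' => hs g' (Multiset.mem_cons_of_mem hg'))).trans le_order_mul

variable [NormedCommRing R]

theorem norm_coeff_one_le (e : σ →₀ ℕ) : ‖coeff e (1 : MvPowerSeries σ R)‖ ≤ ‖(1 : R)‖ := by
  classical
  rw [coeff_one]
  split_ifs <;> simp

theorem norm_coeff_X_le (e : σ →₀ ℕ) (k : σ) : ‖coeff e (X k : MvPowerSeries σ R)‖ ≤ ‖(1 : R)‖ := by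
  classical
  rw [coeff_X]
  split_ifs <;> simp

theorem norm_coeff_X_le_mul_pow {C A : ℝ} (hC : 0 ≤ C) (hA : 0 ≤ A) (h : ‖(1 : R)‖ ≤ C * A)
    (e : σ →₀ ℕ) (k : σ) : ‖coeff e (X k : MvPowerSeries σ R)‖ ≤ C * A ^ degree e := by
  classical
  rw [coeff_X]
  split_ifs with he
  · simpa [he] using h
  · rw [norm_zero]
    positivity

variable [IsUltrametricDist R]

/-- Since the factors have zero constant term, only their coefficients in degrees
`≤ degree d + 1 - card s` enter the coefficient of `X ^ d` in the product. -/
theorem norm_coeff_multiset_prod_le {s : Multiset (MvPowerSeries σ R)} {C A : ℝ}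
    (hC : 0 ≤ C) (hA : 0 ≤ A) (hs0 : ∀ g ∈ s, constantCoeff g = 0) {d : σ →₀ ℕ}
    (hs : ∀ g ∈ s, ∀ e, degree e + Multiset.card s ≤ degree d + 1 →
      ‖coeff e g‖ ≤ C * A ^ degree e) :
    ‖coeff d s.prod‖ ≤ ‖(1 : R)‖ * C ^ Multiset.card s * A ^ degree d := by
  classical
  induction s using Multiset.induction_on generalizing d with
  | empty =>
    rw [Multiset.prod_zero, coeff_one]
    split_ifs with hd
    · simp [hd]
    · rw [norm_zero]
      positivity
  | cons g t ih =>
    have hg0 := hs0 g (Multiset.mem_cons_self g t)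
    have ht0 : ∀ g' ∈ t, constantCoeff g' = 0 := fun g' hg' => hs0 g' (Multiset.mem_cons_of_mem hg')
    rw [Multiset.prod_cons, coeff_mul]
    refine IsUltrametricDist.norm_sum_le_of_forall_le_of_nonneg (by positivity)
      fun ⟨e₁, e₂⟩ he => ?_
    have hdeg : degree e₁ + degree e₂ = degree d := by
      rw [← map_add, Finset.HasAntidiagonal.mem_antidiagonal.1 he]
    by_cases hvanish : degree e₁ = 0 ∨ degree e₂ < Multiset.card t
    · have : coeff e₁ g * coeff e₂ t.prod = 0 := by
        rcases hvanish with h | h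
        · rw [(degree_eq_zero_iff e₁).1 h, coeff_zero_eq_constantCoeff_apply, hg0, zero_mul]
        · rw [coeff_of_lt_order ((Nat.cast_lt.2 h).trans_le (card_le_order_multiset_prod ht0)),
            mul_zero]
      rw [this, norm_zero]
      positivity
    push Not at hvanish
    simp only [Multiset.card_cons] at hs ⊢
    calc ‖coeff e₁ g * coeff e₂ t.prod‖ ≤ ‖coeff e₁ g‖ * ‖coeff e₂ t.prod‖ := norm_mul_le _ _
      _ ≤ (C * A ^ degree e₁) * (‖(1 : R)‖ * C ^ Multiset.card t * A ^ degree e₂) := by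
        gcongr
        · exact hs g (Multiset.mem_cons_self g t) e₁ (by omega)
        · exact ih ht0 fun g' hg' e he => hs g' (Multiset.mem_cons_of_mem hg') e (by omega)
      _ = ‖(1 : R)‖ * C ^ (Multiset.card t + 1) * A ^ degree d := by
        rw [← hdeg, pow_succ, pow_add]
        ring

theorem norm_coeff_aeval_monomial_le_of_two_le_degree {φ : τ → MvPowerSeries σ R} {C A : ℝ}
    (hC0 : 0 ≤ C) (hC1 : C ≤ 1) (hA : 0 ≤ A) (hφ0 : ∀ s, constantCoeff (φ s) = 0) {N : ℕ}
    (hφ : ∀ s e, degree e ≤ N → ‖coeff e (φ s)‖ ≤ C * A ^ degree e)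
    {d : τ →₀ ℕ} (hd : 2 ≤ degree d) {I : σ →₀ ℕ} (hI : degree I = N + 1) :
    ‖coeff I (MvPolynomial.aeval φ (MvPolynomial.monomial d (1 : R)))‖ ≤
      ‖(1 : R)‖ * C ^ 2 * A ^ (N + 1) := by
  have hcard : Multiset.card (d.toMultiset.map φ) = degree d := by
    rw [Multiset.card_map, card_toMultiset]
    rfl
  rw [MvPolynomial.aeval_monomial_one_eq_prod_toMultiset, ← hI]
  refine (norm_coeff_multiset_prod_le hC0 hA ?_ ?_).trans ?_
  · simp only [Multiset.mem_map]
    rintro _ ⟨s, -, rfl⟩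
    exact hφ0 s
  · simp only [Multiset.mem_map, hcard]
    rintro _ ⟨s, -, rfl⟩ e he
    exact hφ s e (by omega)
  · rw [hcard]
    gcongr ‖(1 : R)‖ * ?_ * _
    exact pow_le_pow_of_le_one hC0 hC1 hd

end MvPowerSeries

namespace ImplicitFunction

open MvPowerSeries

variable {σ ι R : Type*}

section CommRing

variable [CommRing R]

/-- The matrix `(∂P_i/∂τ_j)(0, 0)`. -/
noncomputable def jacobianAtZero (P : ι → MvPolynomial (σ ⊕ ι) R) : Matrix ι ι R :=
  Matrix.of fun i j => (P i).coeff (single (Sum.inr j) 1)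

variable [Fintype ι]

open Classical in
noncomputable def nonlinearCoeff (p : MvPolynomial (σ ⊕ ι) R) (F : ι → MvPowerSeries σ R)
    (I : σ →₀ ℕ) : R :=
  ∑ d ∈ p.support \ Finset.univ.image (fun j => single (Sum.inr j) 1),
    p.coeff d * coeff I (MvPolynomial.aeval (Sum.elim X F) (MvPolynomial.monomial d (1 : R)))

theorem coeff_aeval_sumElim_X (p : MvPolynomial (σ ⊕ ι) R) (F : ι → MvPowerSeries σ R)
    (I : σ →₀ ℕ) :
    coeff I (MvPolynomial.aeval (Sum.elim X F) p) =
      ∑ j, p.coeff (single (Sum.inr j) 1) * coeff I (F j) + nonlinearCoeff p F I := by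
  classical
  have hexpand : coeff I (MvPolynomial.aeval (Sum.elim X F) p) =
      ∑ d ∈ p.support, p.coeff d *
        coeff I (MvPolynomial.aeval (Sum.elim X F) (MvPolynomial.monomial d (1 : R))) := by
    conv_lhs => rw [p.as_sum, map_sum, map_sum]
    refine Finset.sum_congr rfl fun d _ => ?_
    rw [← MvPowerSeries.coeff_smul, ← map_smul, MvPolynomial.smul_monomial, smul_eq_mul, mul_one]
  rw [hexpand, ← Finset.sum_inter_add_sum_sdiff p.support
    (Finset.univ.image fun j => single (Sum.inr j) 1), Finset.sum_subset Finset.inter_subset_right,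
    Finset.sum_image]
  · simp [nonlinearCoeff, MvPolynomial.aeval_monomial]
  · exact fun j _ j' _ h => Sum.inr_injective (single_left_injective one_ne_zero h)
  · intro d hd hd'
    rw [MvPolynomial.notMem_support_iff.1 fun h => hd' (Finset.mem_inter.2 ⟨h, hd⟩), zero_mul]

end CommRing

variable [NormedCommRing R] [IsUltrametricDist R] {F : ι → MvPowerSeries σ R} {M : ℝ} {N : ℕ}
  {I : σ →₀ ℕ}

theorem norm_coeff_aeval_sumElim_monomial_le (hF0 : ∀ j, constantCoeff (F j) = 0)
    (hM1 : 1 ≤ M) (hM : ‖(1 : R)‖ ≤ M)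
    (hF : ∀ j e, degree e ≤ N → ‖coeff e (F j)‖ ≤ M⁻¹ * (M ^ 2) ^ degree e)
    {d : σ ⊕ ι →₀ ℕ} (hd : ∀ j, d ≠ single (Sum.inr j) 1) (hI : degree I = N + 1) :
    ‖coeff I (MvPolynomial.aeval (Sum.elim X F) (MvPolynomial.monomial d (1 : R)))‖ ≤
      ‖(1 : R)‖ * (M ^ 2) ^ N := by
  have hM0 : 0 < M := one_pos.trans_le hM1
  rcases le_or_gt 2 (degree d) with hd2 | hd1
  · have hX : ‖(1 : R)‖ ≤ M⁻¹ * M ^ 2 := by rwa [sq, inv_mul_cancel_left₀ hM0.ne']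
    refine (norm_coeff_aeval_monomial_le_of_two_le_degree (C := M⁻¹) (A := M ^ 2)
      (by positivity) (inv_le_one_of_one_le₀ hM1) (by positivity) ?_ ?_ hd2 hI).trans_eq ?_
    · rintro (k | j)
      exacts [constantCoeff_X k, hF0 j]
    · rintro (k | j) e he
      exacts [norm_coeff_X_le_mul_pow (by positivity) (by positivity) hX e k, hF j e he]
    · field_simp
      ring
  · refine le_trans ?_ (le_mul_of_one_le_right (norm_nonneg _) (one_le_pow₀ (one_le_pow₀ hM1)))
    rcases eq_zero_or_exists_eq_single_of_degree_le_one (Nat.le_of_lt_succ hd1) with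
      rfl | ⟨k | j, rfl⟩
    · simpa [MvPolynomial.aeval_monomial] using norm_coeff_one_le I
    · simpa [MvPolynomial.aeval_monomial] using norm_coeff_X_le I k
    · exact absurd rfl (hd j)

variable [Fintype ι]

theorem norm_nonlinearCoeff_le (hF0 : ∀ j, constantCoeff (F j) = 0)
    (hM1 : 1 ≤ M) (hM : ‖(1 : R)‖ ≤ M)
    (hF : ∀ j e, degree e ≤ N → ‖coeff e (F j)‖ ≤ M⁻¹ * (M ^ 2) ^ degree e)
    {p : MvPolynomial (σ ⊕ ι) R} {CP : ℝ} (hCP0 : 0 ≤ CP) (hCP : ∀ d ∈ p.support, ‖p.coeff d‖ ≤ CP)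
    (hI : degree I = N + 1) :
    ‖nonlinearCoeff p F I‖ ≤ CP * (‖(1 : R)‖ * (M ^ 2) ^ N) := by
  classical
  refine IsUltrametricDist.norm_sum_le_of_forall_le_of_nonneg (mul_nonneg hCP0 (by positivity))
    fun d hd => (norm_mul_le _ _).trans ?_
  obtain ⟨hdP, hdlin⟩ := Finset.mem_sdiff.1 hd
  have hd' : ∀ j, d ≠ single (Sum.inr j) 1 := fun j h =>
    hdlin (h ▸ Finset.mem_image_of_mem _ (Finset.mem_univ j))
  exact mul_le_mul (hCP d hdP) (norm_coeff_aeval_sumElim_monomial_le hF0 hM1 hM hF hd' hI)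
    (norm_nonneg _) hCP0

variable [DecidableEq ι] {P : ι → MvPolynomial (σ ⊕ ι) R}

theorem norm_coeff_le_of_forall_degree_lt (hB : IsUnit (jacobianAtZero P).det)
    (hF0 : ∀ j, constantCoeff (F j) = 0) (hFP : ∀ i, MvPolynomial.aeval (Sum.elim X F) (P i) = 0)
    {L CP : ℝ} (hL : ∀ i j, ‖(jacobianAtZero P)⁻¹ i j‖ ≤ L) (hCP0 : 0 ≤ CP)
    (hCP : ∀ i, ∀ d ∈ (P i).support, ‖(P i).coeff d‖ ≤ CP)
    (hM1 : 1 ≤ M) (hM : ‖(1 : R)‖ ≤ M) (hLM : L * (CP * ‖(1 : R)‖) ≤ M)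
    (ih : ∀ j e, degree e < degree I → ‖coeff e (F j)‖ ≤ M⁻¹ * (M ^ 2) ^ degree e) (j : ι) :
    ‖coeff I (F j)‖ ≤ M⁻¹ * (M ^ 2) ^ degree I := by
  have hM0 : 0 < M := one_pos.trans_le hM1
  rcases Nat.eq_zero_or_pos (degree I) with hI0 | hIpos
  · rw [(degree_eq_zero_iff I).1 hI0, coeff_zero_eq_constantCoeff_apply, hF0, norm_zero]
    positivity
  obtain ⟨N, hN⟩ := Nat.exists_eq_add_one_of_ne_zero hIpos.ne'
  have hE : ∀ i, ‖nonlinearCoeff (P i) F I‖ ≤ CP * (‖(1 : R)‖ * (M ^ 2) ^ N) := fun i =>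
    norm_nonlinearCoeff_le hF0 hM1 hM (fun j e he => ih j e (by omega)) hCP0 (hCP i) hN
  have hlin : jacobianAtZero P *ᵥ (fun j => coeff I (F j)) +
      (fun i => nonlinearCoeff (P i) F I) = 0 := by
    funext i
    simpa [coeff_aeval_sumElim_X, jacobianAtZero, mulVec, dotProduct] using
      congrArg (coeff I) (hFP i)
  calc ‖coeff I (F j)‖ ≤ L * (CP * (‖(1 : R)‖ * (M ^ 2) ^ N)) :=
        norm_le_of_mulVec_add_eq_zero hB hlin hL hE j
    _ = L * (CP * ‖(1 : R)‖) * (M ^ 2) ^ N := by ring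
    _ ≤ M * (M ^ 2) ^ N := by gcongr
    _ = M⁻¹ * (M ^ 2) ^ degree I := by
      rw [hN]
      field_simp
      ring

theorem exists_norm_coeff_le_inv_mul_sq_pow (hB : IsUnit (jacobianAtZero P).det)
    (hF0 : ∀ j, constantCoeff (F j) = 0) (hFP : ∀ i, MvPolynomial.aeval (Sum.elim X F) (P i) = 0) :
    ∃ M : ℝ, 0 < M ∧ ∀ j I, ‖coeff I (F j)‖ ≤ M⁻¹ * (M ^ 2) ^ degree I := by
  obtain ⟨L, hL⟩ := (Set.finite_range fun x : ι × ι => ‖(jacobianAtZero P)⁻¹ x.1 x.2‖).bddAbove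
  obtain ⟨CP, hCP⟩ :=
    (Set.finite_range fun x : Σ i, (P i).support => ‖(P x.1).coeff x.2‖).bddAbove
  set M := max 1 (max ‖(1 : R)‖ (L * (max CP 0 * ‖(1 : R)‖)))
  have hM1 : 1 ≤ M := le_max_left _ _
  refine ⟨M, one_pos.trans_le hM1, fun j I => ?_⟩
  induction hI : degree I using Nat.strong_induction_on generalizing I j with
  | _ N ih =>
    exact hI ▸ norm_coeff_le_of_forall_degree_lt hB hF0 hFP (fun i j => hL ⟨(i, j), rfl⟩)
      (le_max_right _ _) (fun i d hd => (hCP ⟨⟨i, d, hd⟩, rfl⟩).trans (le_max_left _ _)) hM1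
      ((le_max_left _ _).trans (le_max_right _ _)) ((le_max_right _ _).trans (le_max_right _ _))
      (fun j' e he => ih _ (hI ▸ he) j' e rfl) j

end ImplicitFunction

theorem Set.finite_setOf_le_mul_inv_two_mul_pow_degree {ι σ : Type*} [Finite ι] [Finite σ]
    {a : ι × (σ →₀ ℕ) → ℝ} {C A ε : ℝ} (hA : 0 < A) (ha : ∀ q, a q ≤ C * A ^ degree q.2)
    (hε : 0 < ε) : {q | ε ≤ a q * (2 * A)⁻¹ ^ degree q.2}.Finite := by
  have hlim : Filter.Tendsto (fun k : ℕ => C * 2⁻¹ ^ k) Filter.atTop (nhds 0) := by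
    simpa using (tendsto_pow_atTop_nhds_zero_of_lt_one (by norm_num)
      (by norm_num : (2⁻¹ : ℝ) < 1)).const_mul C
  obtain ⟨n, hn⟩ := Filter.eventually_atTop.1 (hlim.eventually_lt_const hε)
  refine (finite_univ.prod (finite_of_degree_lt n)).subset fun q hq => ⟨trivial, ?_⟩
  by_contra hqn
  refine (hn _ (not_lt.1 hqn)).not_ge (hq.trans ?_)
  calc a q * (2 * A)⁻¹ ^ degree q.2 ≤ C * A ^ degree q.2 * (2 * A)⁻¹ ^ degree q.2 := by
        gcongr
        exact ha q
    _ = C * 2⁻¹ ^ degree q.2 := by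
      rw [mul_inv, mul_pow, mul_assoc, ← mul_assoc (A ^ _), mul_comm (A ^ _), mul_assoc,
        ← mul_pow, mul_inv_cancel₀ hA.ne', one_pow, mul_one]

theorem implicit_function_positive_radius_of_convergence_general
    {R : Type*} [NormedCommRing R] [IsUltrametricDist R]
    {n m : ℕ} (P : Fin m → MvPolynomial (Fin n ⊕ Fin m) R)
    (hjac : IsUnit (Matrix.det (Matrix.of fun i j : Fin m =>
      MvPolynomial.eval (fun _ => (0 : R)) (MvPolynomial.pderiv (Sum.inr j) (P i)))))
    (F : Fin m → MvPowerSeries (Fin n) R)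
    (hF0 : ∀ j, MvPowerSeries.constantCoeff (F j) = 0)
    (hFP : ∀ i, MvPolynomial.aeval
      (Sum.elim (fun k => (MvPowerSeries.X k : MvPowerSeries (Fin n) R)) F) (P i) = 0) :
    ∃ r : ℝ, 0 < r ∧ ∀ ε : ℝ, 0 < ε →
      {q : Fin m × (Fin n →₀ ℕ) |
        ε ≤ ‖MvPowerSeries.coeff q.2 (F q.1)‖ * r ^ (q.2.sum fun _ k => k)}.Finite := by
  have hB : IsUnit (ImplicitFunction.jacobianAtZero P).det := by
    unfold ImplicitFunction.jacobianAtZero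
    simpa only [MvPolynomial.eval_zero_pderiv] using hjac
  obtain ⟨M, hM0, hM⟩ := ImplicitFunction.exists_norm_coeff_le_inv_mul_sq_pow hB hF0 hFP
  exact ⟨(2 * M ^ 2)⁻¹, by positivity, fun ε hε =>
    Set.finite_setOf_le_mul_inv_two_mul_pow_degree (by positivity) (fun q => hM q.1 q.2) hε⟩

theorem implicit_function_positive_radius_of_convergence
    {K : Type*} [NontriviallyNormedField K] [CompleteSpace K] [IsUltrametricDist K]
    {R : Type*} [NormedCommRing R] [NormedAlgebra K R] [CompleteSpace R] [IsUltrametricDist R]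
    {n m : ℕ} (P : Fin m → MvPolynomial (Fin n ⊕ Fin m) R)
    (hP0 : ∀ i, MvPolynomial.eval (fun _ => (0 : R)) (P i) = 0)
    (hjac : IsUnit (Matrix.det (Matrix.of fun i j : Fin m =>
      MvPolynomial.eval (fun _ => (0 : R)) (MvPolynomial.pderiv (Sum.inr j) (P i)))))
    (F : Fin m → MvPowerSeries (Fin n) R)
    (hF0 : ∀ j, MvPowerSeries.constantCoeff (F j) = 0)
    (hFP : ∀ i, MvPolynomial.aeval
      (Sum.elim (fun k => (MvPowerSeries.X k : MvPowerSeries (Fin n) R)) F) (P i) = 0) :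
    ∃ r : ℝ, 0 < r ∧ ∀ ε : ℝ, 0 < ε →
      {q : Fin m × (Fin n →₀ ℕ) |
        ε ≤ ‖MvPowerSeries.coeff q.2 (F q.1)‖ * r ^ (q.2.sum fun _ k => k)}.Finite :=
  implicit_function_positive_radius_of_convergence_general P hjac F hF0 hFP
end

section
/- Let K be a complete non-archimedean field whose value group |K^×| is dense in ℝ_{>0}. Let R → S be an injective integral extension of integral domains which are K-algebras. Let |·| be a multiplicative norm on R extending the absolute value of K, and let |·|₁ and |·|₂ be two multiplicative norms on S whose restrictions to R both equal |·|. Suppose there is a real number ε ∈ (0,1] such that for all b ∈ S, |b|₁ ≤ ε implies |b|₂ ≤ 1. Then |·|₁ = |·|₂. -/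
/-!
Statement 4: two multiplicative norms on an integral extension `S` of `R` that agree on `R`
and satisfy the comparison condition `|b|₁ ≤ ε → |b|₂ ≤ 1` must coincide
(over a complete non-archimedean field with dense value group).
-/

/-- A multiplicative (non-archimedean, `K`-compatible) norm on a `K`-algebra. -/
def IsMulNorm (K : Type*) [NontriviallyNormedField K] {A : Type*} [CommRing A] [Algebra K A]
    (f : A → ℝ) : Prop :=
  (∀ a, 0 ≤ f a) ∧ (∀ a, f a = 0 ↔ a = 0) ∧ (∀ a b, f (a * b) = f a * f b) ∧
    (∀ a b, f (a + b) ≤ max (f a) (f b)) ∧ (∀ (c : K) (a : A), f (c • a) = ‖c‖ * f a)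

theorem mulNorm_unique_of_integral
    {K : Type*} [NontriviallyNormedField K] [CompleteSpace K] [IsUltrametricDist K]
    -- the value group of `K` is dense in `ℝ_{>0}`
    (hdense : ∀ r ε : ℝ, 0 < r → 0 < ε → ∃ x : K, x ≠ 0 ∧ |‖x‖ - r| < ε)
    {R S : Type*} [CommRing R] [IsDomain R] [Algebra K R]
    [CommRing S] [IsDomain S] [Algebra K S] [Algebra R S] [IsScalarTower K R S]
    (hinj : Function.Injective (algebraMap R S)) [Algebra.IsIntegral R S]
    (nR : R → ℝ) (n1 n2 : S → ℝ)
    (hnR : IsMulNorm K nR) (hn1 : IsMulNorm K n1) (hn2 : IsMulNorm K n2)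
    (hres1 : ∀ r : R, n1 (algebraMap R S r) = nR r)
    (hres2 : ∀ r : R, n2 (algebraMap R S r) = nR r)
    (ε : ℝ) (hε0 : 0 < ε) (hε1 : ε ≤ 1)
    (hcomp : ∀ b : S, n1 b ≤ ε → n2 b ≤ 1) :
    n1 = n2 := by
  obtain ⟨h1pos, h1zero, h1mul, h1add, h1smul⟩ := hn1
  obtain ⟨h2pos, h2zero, h2mul, h2add, h2smul⟩ := hn2
  obtain ⟨hRpos, hRzero, hRmul, hRadd, hRsmul⟩ := hnR
  have h1one : n1 1 = 1 := by
    have h := h1mul 1 1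
    rw [mul_one] at h
    have h10 : n1 1 ≠ 0 := fun h' => one_ne_zero ((h1zero 1).1 h')
    exact mul_left_cancel₀ h10 (by rw [mul_one, ← h])
  have h2one : n2 1 = 1 := by
    have h := h2mul 1 1
    rw [mul_one] at h
    have h20 : n2 1 ≠ 0 := fun h' => one_ne_zero ((h2zero 1).1 h')
    exact mul_left_cancel₀ h20 (by rw [mul_one, ← h])
  have h1pow : ∀ (b : S) (k : ℕ), n1 (b ^ k) = (n1 b) ^ k := by
    intro b k
    induction k with
    | zero => simpa using h1one
    | succ k ih => rw [pow_succ, pow_succ, h1mul, ih]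
  have h2pow : ∀ (b : S) (k : ℕ), n2 (b ^ k) = (n2 b) ^ k := by
    intro b k
    induction k with
    | zero => simpa using h2one
    | succ k ih => rw [pow_succ, pow_succ, h2mul, ih]
  have h1neg : ∀ b : S, n1 (-b) = n1 b := by
    intro b
    have h := h1smul (-1 : K) b
    simpa using h
  have h2neg : ∀ b : S, n2 (-b) = n2 b := by
    intro b
    have h := h2smul (-1 : K) b
    simpa using h
  -- Step 1: `n2 ≤ n1` pointwise, via the comparison condition and scaling.
  have hle : ∀ b : S, n2 b ≤ n1 b := by
    intro b
    by_contra hlt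
    push_neg at hlt
    have hb0 : b ≠ 0 := by
      intro h
      rw [h, (h1zero 0).2 rfl, (h2zero 0).2 rfl] at hlt
      exact lt_irrefl 0 hlt
    have h1b : 0 < n1 b := lt_of_le_of_ne (h1pos b) fun h => hb0 ((h1zero b).1 h.symm)
    have hr : 1 < n2 b / n1 b := (one_lt_div h1b).2 hlt
    obtain ⟨k, hk⟩ := pow_unbounded_of_one_lt (2 / ε) hr
    set A : ℝ := (n1 b) ^ k with hAdef
    have hA : 0 < A := pow_pos h1b k
    obtain ⟨x, hx0, hx⟩ := hdense (3 * ε / 4 / A) (ε / 4 / A) (by positivity) (by positivity)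
    rw [abs_lt] at hx
    have hxub : ‖x‖ * A < ε := by
      have h1 : ‖x‖ < 3 * ε / 4 / A + ε / 4 / A := by linarith [hx.2]
      have h2 : (3 * ε / 4 / A + ε / 4 / A) = ε / A := by field_simp; ring
      rw [h2] at h1
      exact (lt_div_iff₀ hA).1 h1
    have hxlb : ε / 2 < ‖x‖ * A := by
      have h1 : 3 * ε / 4 / A - ε / 4 / A < ‖x‖ := by linarith [hx.1]
      have h2 : (3 * ε / 4 / A - ε / 4 / A) = ε / 2 / A := by field_simp; ring
      rw [h2] at h1
      exact (div_lt_iff₀ hA).1 h1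
    have hn1xs : n1 (x • b ^ k) ≤ ε := by
      rw [h1smul, h1pow]
      exact le_of_lt hxub
    have hn2xs : n2 (x • b ^ k) ≤ 1 := hcomp _ hn1xs
    rw [h2smul, h2pow] at hn2xs
    have hsplit : (n2 b) ^ k = A * (n2 b / n1 b) ^ k := by
      rw [div_pow, hAdef]
      field_simp
    rw [hsplit] at hn2xs
    have : 1 < ‖x‖ * (A * (n2 b / n1 b) ^ k) := by
      have hxpos : 0 < ‖x‖ := norm_pos_iff.2 hx0
      calc 1 = (ε / 2) * (2 / ε) := by field_simp
        _ < (‖x‖ * A) * (n2 b / n1 b) ^ k := by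
            apply mul_lt_mul' (le_of_lt hxlb) hk (by positivity) (by linarith)
        _ = ‖x‖ * (A * (n2 b / n1 b) ^ k) := by ring
    linarith
  -- Step 2: no element can satisfy `n2 c < 1 < n1 c`.
  have key : ∀ c : S, n2 c < 1 → 1 < n1 c → False := by
    intro c hc2 hc1
    have hc0 : c ≠ 0 := by
      intro h
      rw [h, (h1zero 0).2 rfl] at hc1
      linarith
    obtain ⟨p, hpm, hp0⟩ := Algebra.IsIntegral.isIntegral (R := R) c
    have main : ∀ (m : ℕ) (p : Polynomial R), p.natDegree = m → p.Monic →
        Polynomial.aeval c p = 0 → False := by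
      intro m
      induction m with
      | zero =>
        intro p hdeg hm h0
        rw [hm.natDegree_eq_zero.1 hdeg] at h0
        simp at h0
      | succ m ih =>
        intro p hdeg hm h0
        set u : S := Polynomial.aeval c p.divX with hu
        have hsplit : u * c + algebraMap R S (p.coeff 0) = 0 := by
          have h := Polynomial.divX_mul_X_add p
          have h2 := congrArg (Polynomial.aeval c) h
          rw [map_add, map_mul, Polynomial.aeval_X, Polynomial.aeval_C, h0] at h2
          exact h2
        have hdivX_deg : p.divX.natDegree = m := by
          rw [Polynomial.natDegree_divX_eq_natDegree_tsub_one, hdeg]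
          omega
        have hdivX_monic : p.divX.Monic := by
          unfold Polynomial.Monic Polynomial.leadingCoeff
          rw [hdivX_deg, Polynomial.coeff_divX, ← hdeg]
          exact hm
        by_cases h00 : p.coeff 0 = 0
        · rw [h00, map_zero, add_zero] at hsplit
          rcases mul_eq_zero.1 hsplit with h | h
          · exact ih p.divX hdivX_deg hdivX_monic h
          · exact hc0 h
        · -- norm contradiction
          have heq : algebraMap R S (p.coeff 0) = -(u * c) := by linear_combination hsplit
          have ht1 : nR (p.coeff 0) = n1 u * n1 c := by
            rw [← hres1, heq, h1neg, h1mul]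
          have ht2 : nR (p.coeff 0) = n2 u * n2 c := by
            rw [← hres2, heq, h2neg, h2mul]
          have htpos : 0 < nR (p.coeff 0) :=
            lt_of_le_of_ne (hRpos _) fun h => h00 ((hRzero _).1 h.symm)
          have hupos : 0 < n1 u := by
            rcases lt_or_eq_of_le (h1pos u) with h | h
            · exact h
            · rw [← h, zero_mul] at ht1; linarith
          have chain : nR (p.coeff 0) < nR (p.coeff 0) := by
            calc nR (p.coeff 0) = n2 u * n2 c := ht2
              _ ≤ n1 u * n2 c := mul_le_mul_of_nonneg_right (hle u) (h2pos c)
              _ < n1 u * 1 := by exact mul_lt_mul_of_pos_left hc2 hupos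
              _ = n1 u := mul_one _
              _ < n1 u * n1 c := lt_mul_of_one_lt_right hupos hc1
              _ = nR (p.coeff 0) := ht1.symm
          exact lt_irrefl _ chain
    exact main p.natDegree p rfl hpm hp0
  -- Conclusion
  funext b
  by_contra hne
  have hlt : n2 b < n1 b := lt_of_le_of_ne (hle b) fun h => hne h.symm
  have h2b : 0 ≤ n2 b := h2pos b
  have h1b : 0 < n1 b := lt_of_le_of_lt h2b hlt
  obtain ⟨x, hx0, hx⟩ := hdense ((n1 b + n2 b) / 2) ((n1 b - n2 b) / 2)
    (by linarith) (by linarith)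
  rw [abs_lt] at hx
  have hxl : n2 b < ‖x‖ := by linarith [hx.1]
  have hxu : ‖x‖ < n1 b := by linarith [hx.2]
  have hxpos : 0 < ‖x‖ := lt_of_le_of_lt h2b hxl
  have hc1 : 1 < n1 (x⁻¹ • b) := by
    rw [h1smul, norm_inv, inv_mul_eq_div, lt_div_iff₀ hxpos, one_mul]
    exact hxu
  have hc2 : n2 (x⁻¹ • b) < 1 := by
    rw [h2smul, norm_inv, inv_mul_eq_div, div_lt_one hxpos]
    exact hxl
  exact key _ hc2 hc1
end

section
/- Let G : T → T′ be a triangulated (exact) functor between triangulated categories. Let C be the full subcategory of T′ consisting of the objects M for which the functor N ↦ Hom_{T′}(M, G(N)) from T to abelian groups is corepresentable, i.e., naturally isomorphic to Hom_T(F_M, −) for some object F_M of T. Then: (1) C is closed under cones: if f : M₁ → M₂ is a morphism of T′ with M₁, M₂ ∈ C and M₁ → M₂ → C(f) → M₁[1] is a distinguished triangle, then C(f) ∈ C; (2) if T and T′ admit small coproducts, then C is closed under small direct sums: for any set-indexed family {M_i}_{i∈I} of objects of C, the coproduct ⊕_{i∈I} M_i belongs to C. -/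
/-!
An object `M` has the property exactly when some `u : M ⟶ G.obj A` is universal, i.e.
`f ↦ u ≫ G.map f` is bijective on `A ⟶ N` for every `N`. Given a distinguished triangle
`M₁ → M₂ → M₃ → M₁⟦1⟧` and universal `u₁ : M₁ ⟶ G.obj A`, `u₂ : M₂ ⟶ G.obj B`, lift `M₁ → M₂`
to `φ : A ⟶ B`, complete `φ` to a distinguished triangle `A → B → C → A⟦1⟧` and extend
`(u₁, u₂)` to a morphism from the first triangle to its image under `G`. The five lemma, applied
to the long exact sequences of `Hom(-, N)` and `Hom(-, G.obj N)` (whose outer terms are handled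
by shifting `u₁`, `u₂`), shows that the third component `M₃ ⟶ G.obj C` is universal. Direct sums
are a special case of the fact that a partial left adjoint is defined on colimits of objects
where it is defined.
-/

open CategoryTheory CategoryTheory.Limits CategoryTheory.Pretriangulated

universe v u u'

namespace CategoryTheory.Functor

open Opposite

variable {T : Type u} {T' : Type u'} [Category.{v} T] [Category.{v} T']

def IsUniversalMorphism (G : T ⥤ T') {M : T'} {A : T} (u : M ⟶ G.obj A) : Prop :=
  ∀ N : T, Function.Bijective fun f : A ⟶ N => u ≫ G.map f

lemma isCorepresentable_iff_exists_isUniversalMorphism (G : T ⥤ T') (M : T') :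
    (G ⋙ coyoneda.obj (op M)).IsCorepresentable ↔
      ∃ (A : T) (u : M ⟶ G.obj A), G.IsUniversalMorphism u := by
  constructor
  · rintro ⟨A, ⟨e⟩⟩
    refine ⟨A, e.homEquiv (𝟙 A), fun N => ?_⟩
    have : (fun f : A ⟶ N => e.homEquiv (𝟙 A) ≫ G.map f) = e.homEquiv :=
      funext fun f => (e.homEquiv_eq f).symm
    exact this ▸ e.homEquiv.bijective
  · rintro ⟨A, u, hu⟩
    exact ⟨A, ⟨{ homEquiv := Equiv.ofBijective _ (hu _)
                 homEquiv_comp := fun g f => by simp }⟩⟩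

lemma IsUniversalMorphism.shift [HasShift T ℤ] [HasShift T' ℤ] {G : T ⥤ T'} [G.CommShift ℤ]
    {M : T'} {A : T} {u : M ⟶ G.obj A} (hu : G.IsUniversalMorphism u) (n : ℤ) :
    G.IsUniversalMorphism (u⟦n⟧' ≫ (G.commShiftIso n).inv.app A) := by
  intro N
  let ι : N⟦-n⟧⟦n⟧ ≅ N := (shiftFunctorCompIsoId T (-n) n (neg_add_cancel n)).app N
  have hshift : Function.Bijective fun g : A ⟶ N⟦-n⟧ => g⟦n⟧' ≫ ι.hom :=
    ι.homToEquiv.bijective.comp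
      ⟨(shiftFunctor T n).map_injective, (shiftFunctor T n).map_surjective⟩
  have hcomp : Function.Bijective fun g : A ⟶ N⟦-n⟧ =>
      (u ≫ G.map g)⟦n⟧' ≫ ((G.commShiftIso n).app _).inv ≫ G.map ι.hom :=
    (((G.commShiftIso n).app _).symm ≪≫ G.mapIso ι).homToEquiv.bijective.comp
      (Function.Bijective.comp ⟨(shiftFunctor T' n).map_injective,
        (shiftFunctor T' n).map_surjective⟩ (hu _))
  rw [← Function.Bijective.of_comp_iff _ hshift]
  convert hcomp using 2 with g
  simp

section FiveLemma

open Category Preadditive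

variable [HasZeroObject T] [HasZeroObject T'] [Preadditive T] [Preadditive T']
  [HasShift T ℤ] [HasShift T' ℤ]
  [∀ n : ℤ, (shiftFunctor T n).Additive] [∀ n : ℤ, (shiftFunctor T' n).Additive]
  [Pretriangulated T] [Pretriangulated T'] {G : T ⥤ T'} [G.CommShift ℤ] [G.Additive]
  {Tri : Triangle T'} {S : Triangle T} (hTri : Tri ∈ distTriang T') (hS : S ∈ distTriang T)
  {u₁ : Tri.obj₁ ⟶ G.obj S.obj₁} {u₂ : Tri.obj₂ ⟶ G.obj S.obj₂} {u₃ : Tri.obj₃ ⟶ G.obj S.obj₃}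
  (comm₁ : Tri.mor₁ ≫ u₂ = u₁ ≫ G.map S.mor₁) (comm₂ : Tri.mor₂ ≫ u₃ = u₂ ≫ G.map S.mor₂)
  (comm₃ : u₃ ≫ G.map S.mor₃ = Tri.mor₃ ≫ u₁⟦(1 : ℤ)⟧' ≫ (G.commShiftIso (1 : ℤ)).inv.app S.obj₁)
  (h₁ : G.IsUniversalMorphism u₁) (h₂ : G.IsUniversalMorphism u₂)
include hTri hS comm₁ comm₂ comm₃ h₁ h₂

lemma IsUniversalMorphism.injective_of_triangle (N : T) :
    Function.Injective fun f : S.obj₃ ⟶ N => u₃ ≫ G.map f := by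
  have shift_comm₁ (w : S.obj₂⟦(1 : ℤ)⟧ ⟶ N) :
      (u₁⟦(1 : ℤ)⟧' ≫ (G.commShiftIso (1 : ℤ)).inv.app S.obj₁) ≫ G.map (S.mor₁⟦(1 : ℤ)⟧' ≫ w) =
        Tri.mor₁⟦(1 : ℤ)⟧' ≫ (u₂⟦(1 : ℤ)⟧' ≫ (G.commShiftIso (1 : ℤ)).inv.app S.obj₂) ≫
          G.map w := by
    simp only [G.map_comp, assoc, ← G.commShiftIso_inv_naturality_assoc,
      ← Functor.map_comp_assoc, comm₁]
  suffices ker : ∀ f : S.obj₃ ⟶ N, u₃ ≫ G.map f = 0 → f = 0 by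
    intro f f' hff'
    rw [← sub_eq_zero]
    exact ker _ (by simpa only [G.map_sub, comp_sub, sub_eq_zero] using hff')
  intro f hf
  have hf₂ : S.mor₂ ≫ f = 0 := (h₂ N).injective <| by
    simp only [G.map_comp, ← reassoc_of% comm₂, hf, comp_zero, G.map_zero]
  obtain ⟨h, rfl⟩ := Triangle.yoneda_exact₃ S hS f hf₂
  have hh :
      Tri.mor₃ ≫ (u₁⟦(1 : ℤ)⟧' ≫ (G.commShiftIso (1 : ℤ)).inv.app S.obj₁) ≫ G.map h = 0 := by
    rw [assoc, ← reassoc_of% comm₃, ← G.map_comp, hf]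
  obtain ⟨w, hw⟩ := Triangle.yoneda_exact₃ _ (rot_of_distTriang _ hTri) _ hh
  obtain ⟨w', rfl⟩ := ((h₂.shift 1) N).surjective w
  have : h = -(S.mor₁⟦(1 : ℤ)⟧' ≫ w') := ((h₁.shift 1) N).injective <| by
    simp only [G.map_neg, comp_neg, shift_comm₁]
    exact hw.trans (neg_comp _ _)
  simp only [this, comp_neg, comp_distTriang_mor_zero₃₁_assoc _ hS, zero_comp, neg_zero]

lemma IsUniversalMorphism.surjective_of_triangle (N : T) :
    Function.Surjective fun f : S.obj₃ ⟶ N => u₃ ≫ G.map f := by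
  intro t
  obtain ⟨g, hg⟩ := (h₂ N).surjective (Tri.mor₂ ≫ t)
  dsimp only at hg
  have hg₁ : S.mor₁ ≫ g = 0 := (h₁ N).injective <| by
    simp only [G.map_comp, ← reassoc_of% comm₁, hg, comp_distTriang_mor_zero₁₂_assoc _ hTri,
      zero_comp, G.map_zero, comp_zero]
  obtain ⟨f, rfl⟩ := Triangle.yoneda_exact₂ S hS g hg₁
  have hf : Tri.mor₂ ≫ (t - u₃ ≫ G.map f) = 0 := by
    rw [comp_sub, reassoc_of% comm₂, ← G.map_comp, hg, sub_self]
  obtain ⟨k, hk⟩ := Triangle.yoneda_exact₃ Tri hTri _ hf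
  obtain ⟨h, rfl⟩ := ((h₁.shift 1) N).surjective k
  refine ⟨f + S.mor₃ ≫ h, ?_⟩
  simp only [G.map_add, comp_add, G.map_comp, reassoc_of% comm₃]
  simp only [assoc] at hk
  rw [← hk, add_sub_cancel]

lemma IsUniversalMorphism.of_triangle : G.IsUniversalMorphism u₃ := fun N =>
  ⟨injective_of_triangle hTri hS comm₁ comm₂ comm₃ h₁ h₂ N,
    surjective_of_triangle hTri hS comm₁ comm₂ comm₃ h₁ h₂ N⟩

end FiveLemma

lemma isCorepresentable_comp_coyoneda_obj₃ [HasZeroObject T] [HasZeroObject T']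
    [Preadditive T] [Preadditive T']
    [HasShift T ℤ] [HasShift T' ℤ]
    [∀ n : ℤ, (shiftFunctor T n).Additive] [∀ n : ℤ, (shiftFunctor T' n).Additive]
    [Pretriangulated T] [Pretriangulated T'] (G : T ⥤ T') [G.CommShift ℤ] [G.IsTriangulated]
    {Tri : Triangle T'} (hTri : Tri ∈ distTriang T')
    (h₁ : (G ⋙ coyoneda.obj (op Tri.obj₁)).IsCorepresentable)
    (h₂ : (G ⋙ coyoneda.obj (op Tri.obj₂)).IsCorepresentable) :
    (G ⋙ coyoneda.obj (op Tri.obj₃)).IsCorepresentable := by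
  rw [isCorepresentable_iff_exists_isUniversalMorphism] at h₁ h₂ ⊢
  obtain ⟨A, u₁, hu₁⟩ := h₁
  obtain ⟨B, u₂, hu₂⟩ := h₂
  obtain ⟨φ, hφ⟩ := (hu₁ B).surjective (Tri.mor₁ ≫ u₂)
  obtain ⟨C, a, b, hS⟩ := distinguished_cocone_triangle φ
  obtain ⟨u₃, comm₂, comm₃⟩ : ∃ u₃ : Tri.obj₃ ⟶ G.obj C, Tri.mor₂ ≫ u₃ = u₂ ≫ G.map a ∧
      Tri.mor₃ ≫ u₁⟦(1 : ℤ)⟧' = u₃ ≫ G.map b ≫ (G.commShiftIso (1 : ℤ)).hom.app A :=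
    complete_distinguished_triangle_morphism Tri _ hTri (G.map_distinguished _ hS) u₁ u₂ hφ.symm
  have comm₃' :
      u₃ ≫ G.map b = Tri.mor₃ ≫ u₁⟦(1 : ℤ)⟧' ≫ (G.commShiftIso (1 : ℤ)).inv.app A := by
    rw [← cancel_mono ((G.commShiftIso (1 : ℤ)).hom.app A)]
    simpa using comm₃.symm
  exact ⟨C, u₃, IsUniversalMorphism.of_triangle hTri hS hφ.symm comm₂ comm₃' hu₁ hu₂⟩

end CategoryTheory.Functor

theorem corepresentable_closed_under_cones_and_coproducts
    {T : Type u} {T' : Type u'} [Category.{v} T] [Category.{v} T']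
    [HasZeroObject T] [HasZeroObject T'] [Preadditive T] [Preadditive T']
    [HasShift T ℤ] [HasShift T' ℤ]
    [∀ n : ℤ, (CategoryTheory.shiftFunctor T n).Additive]
    [∀ n : ℤ, (CategoryTheory.shiftFunctor T' n).Additive]
    [Pretriangulated T] [Pretriangulated T'] [IsTriangulated T] [IsTriangulated T']
    (G : T ⥤ T') [G.CommShift ℤ] [G.IsTriangulated] :
    -- (1) closure under cones
    (∀ (Tri : Triangle T'), (Tri ∈ distTriang T') →
      (G ⋙ coyoneda.obj (Opposite.op Tri.obj₁)).IsCorepresentable →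
      (G ⋙ coyoneda.obj (Opposite.op Tri.obj₂)).IsCorepresentable →
      (G ⋙ coyoneda.obj (Opposite.op Tri.obj₃)).IsCorepresentable) ∧
    -- (2) closure under small direct sums
    (∀ [HasCoproducts.{v} T] [HasCoproducts.{v} T'] (ι : Type v) (M : ι → T'),
      (∀ i, (G ⋙ coyoneda.obj (Opposite.op (M i))).IsCorepresentable) →
      (G ⋙ coyoneda.obj (Opposite.op (∐ M))).IsCorepresentable) := by
  refine ⟨fun Tri hTri h₁ h₂ => G.isCorepresentable_comp_coyoneda_obj₃ hTri h₁ h₂, ?_⟩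
  intro _ _ ι M h
  exact Functor.leftAdjointObjIsDefined_colimit (F := G) (Discrete.functor M) fun j => h j.as
end
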